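/- Let R, V ≠ 0, and let b = ‖R‖²/⟨R,V⟩ if ⟨R,V⟩ < 0 and b = −∞ otherwise (in which case the max below is −‖R‖/‖V‖ and [b, 0) means (−∞, 0)). Let α* = max(−‖R‖/‖V‖, b). Then α* is the minimizer of h(α) = ‖R − αV‖²/|α| over α ∈ [b, 0). -/
import Mathlib


open scoped RealInnerProductSpace

/-- The step-size selection: `α* = max(−‖R‖/‖V‖, b)`, with `b = ‖R‖²/⟨R,V⟩` when
`⟨R,V⟩ < 0` (and no lower bound otherwise), minimizes `h(α) = ‖R − αV‖²/|α|` over the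
feasible negative step sizes. -/
theorem alpha_star_minimizes {N : ℕ}
    (R V : EuclideanSpace ℝ (Fin N)) (hR : R ≠ 0) (hV : V ≠ 0)
    (h : ℝ → ℝ) (hh : ∀ α, h α = ‖R - α • V‖ ^ 2 / |α|)
    (αstar : ℝ)
    (hαstar : αstar = if ⟪R, V⟫ < 0 then max (-(‖R‖ / ‖V‖)) (‖R‖ ^ 2 / ⟪R, V⟫)
      else -(‖R‖ / ‖V‖)) :
    (αstar < 0 ∧ (⟪R, V⟫ < 0 → ‖R‖ ^ 2 / ⟪R, V⟫ ≤ αstar)) ∧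
      ∀ α : ℝ, α < 0 → (⟪R, V⟫ < 0 → ‖R‖ ^ 2 / ⟪R, V⟫ ≤ α) → h αstar ≤ h α := by
  have hRp : (0:ℝ) < ‖R‖ := norm_pos_iff.mpr hR
  have hVp : (0:ℝ) < ‖V‖ := norm_pos_iff.mpr hV
  have hneg : -(‖R‖ / ‖V‖) < 0 := neg_neg_of_pos (div_pos hRp hVp)
  have hbneg : ⟪R, V⟫ < 0 → ‖R‖ ^ 2 / ⟪R, V⟫ < 0 := fun hc =>
    div_neg_of_pos_of_neg (by positivity) hc
  have hexp : ∀ α : ℝ, α < 0 →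
      h α = ‖R‖ ^ 2 / (-α) + 2 * ⟪R, V⟫ + (-α) * ‖V‖ ^ 2 := by
    intro α hα
    have hα' : α ≠ 0 := ne_of_lt hα
    have hn : ‖R - α • V‖ ^ 2 = ‖R‖ ^ 2 - 2 * (α * ⟪R, V⟫) + α ^ 2 * ‖V‖ ^ 2 := by
      rw [@norm_sub_sq_real, real_inner_smul_right, norm_smul]
      simp [abs_of_neg hα]
      ring
    rw [hh, abs_of_neg hα, hn, div_neg, div_neg]
    field_simp
    ring
  have amgm : ∀ β : ℝ, β < 0 → h (-(‖R‖ / ‖V‖)) ≤ h β := by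
    intro β hβ
    have hsb : 0 < -β := by linarith
    rw [hexp _ hneg, hexp _ hβ, neg_neg]
    have e1 : ‖R‖ ^ 2 / (‖R‖ / ‖V‖) + (‖R‖ / ‖V‖) * ‖V‖ ^ 2 = 2 * (‖R‖ * ‖V‖) := by
      field_simp
      ring
    have e2 : ‖R‖ ^ 2 / (-β) + (-β) * ‖V‖ ^ 2 = (‖R‖ ^ 2 + (-β) ^ 2 * ‖V‖ ^ 2) / (-β) := by
      rw [div_neg, div_neg]
      field_simp [hβ.ne]
      ring
    have h2 : 2 * (‖R‖ * ‖V‖) ≤ ‖R‖ ^ 2 / (-β) + (-β) * ‖V‖ ^ 2 := by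
      rw [e2, le_div_iff₀ hsb]
      nlinarith [sq_nonneg (‖R‖ - (-β) * ‖V‖)]
    linarith [e1, h2]
  refine ⟨⟨?_, ?_⟩, ?_⟩
  · rw [hαstar]; split_ifs with hc
    · exact max_lt hneg (hbneg hc)
    · exact hneg
  · intro hc; rw [hαstar, if_pos hc]; exact le_max_right _ _
  · intro α hα hfeas
    rw [hαstar]
    split_ifs with hc
    · rcases max_choice (-(‖R‖ / ‖V‖)) (‖R‖ ^ 2 / ⟪R, V⟫) with hm | hm
      · rw [hm]; exact amgm α hα
      · rw [hm]
        have hb := hfeas hc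
        have htlt : ‖R‖ ^ 2 / ⟪R, V⟫ < 0 := hbneg hc
        have htge : -(‖R‖ / ‖V‖) ≤ ‖R‖ ^ 2 / ⟪R, V⟫ := hm ▸ le_max_left _ _
        set t := ‖R‖ ^ 2 / ⟪R, V⟫ with ht
        have hst : 0 < -t := by linarith
        have hsa : 0 < -α := by linarith
        rw [hexp _ htlt, hexp _ hα]
        have key : ‖R‖ ^ 2 / (-t) + (-t) * ‖V‖ ^ 2 ≤ ‖R‖ ^ 2 / (-α) + (-α) * ‖V‖ ^ 2 := by
          have e1 : ‖R‖ ^ 2 / (-t) + (-t) * ‖V‖ ^ 2 = (‖R‖ ^ 2 + t ^ 2 * ‖V‖ ^ 2) / (-t) := by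
            rw [div_neg, div_neg]
            field_simp [ne_of_lt htlt]
            ring
          have e2 : ‖R‖ ^ 2 / (-α) + (-α) * ‖V‖ ^ 2 = (‖R‖ ^ 2 + α ^ 2 * ‖V‖ ^ 2) / (-α) := by
            rw [div_neg, div_neg]
            field_simp [ne_of_lt hα]
            ring
          rw [e1, e2, div_le_div_iff₀ hst hsa]
          have hta : (-t) * ‖V‖ ≤ ‖R‖ := by
            have : -t ≤ ‖R‖ / ‖V‖ := by linarith
            calc (-t) * ‖V‖ ≤ (‖R‖ / ‖V‖) * ‖V‖ := by
                  exact mul_le_mul_of_nonneg_right this (le_of_lt hVp)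
              _ = ‖R‖ := by field_simp
          have h1 : 0 ≤ α - t := sub_nonneg.mpr hb
          have h3 : t * α ≤ t ^ 2 := by nlinarith
          have h4 : t ^ 2 * ‖V‖ ^ 2 ≤ ‖R‖ ^ 2 := by
            nlinarith [mul_nonneg (sub_nonneg.mpr hta) (add_pos hRp (mul_pos hst hVp)).le]
          have h5 : ‖V‖ ^ 2 * (t * α) ≤ ‖R‖ ^ 2 := by nlinarith [sq_nonneg ‖V‖]
          nlinarith [mul_nonneg h1 (sub_nonneg.mpr h5)]
        linarith
    · exact amgm α hα
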